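/- arXiv:1212.3779 — 4 statements merged into one kernel-verified Lean document; each statement's English description precedes it below -/
import Mathlib

section
/- Let (X,d) be a metric space and f:X→ℝ Lipschitz. Then Lip(f) ≥ Lip_a(f,x) ≥ |∇f|^*(x) for every x, where |∇f|^* is the upper semicontinuous envelope of the slope |∇f|(x) = limsup_{y→x} |f(y)−f(x)|/d(y,x). Moreover, if (X,d) is a length space, the second inequality is an equality: Lip_a(f,x) = |∇f|^*(x). -/
open Filter Set
open scoped ENNReal NNReal Topology

variable {X : Type*}

noncomputable def eLipOn [MetricSpace X] (g : X → ℝ) (E : Set X) : ℝ≥0∞ :=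
  ⨆ x ∈ E, ⨆ y ∈ E, edist (g x) (g y) / edist x y

noncomputable def ALC [MetricSpace X] (g : X → ℝ) (x : X) : ℝ≥0∞ :=
  ⨅ r ∈ Ioi (0:ℝ), eLipOn g (Metric.ball x r)

/- The slope (local Lipschitz constant) `|∇f|(x) = limsup_{y→x} |f(y)-f(x)|/d(y,x)`. -/
noncomputable def eslope [MetricSpace X] (f : X → ℝ) (x : X) : ℝ≥0∞ :=
  limsup (fun y => edist (f y) (f x) / edist y x) (nhdsWithin x {x}ᶜ)

/- The upper semicontinuous envelope: the pointwise infimum of all upper semicontinuous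
functions lying above `h`. -/
noncomputable def uscEnv [MetricSpace X] (h : X → ℝ≥0∞) (x : X) : ℝ≥0∞ :=
  ⨅ u ∈ {u : X → ℝ≥0∞ | UpperSemicontinuous u ∧ ∀ y, h y ≤ u y}, u x

/- A length space: the distance between two points is the infimum of the lengths of
curves joining them. -/
def IsLengthSpace (Y : Type*) [MetricSpace Y] : Prop :=
  ∀ x y : Y, edist x y =
    ⨅ γ : Path x y,
      eVariationOn (fun t : ℝ => γ (Set.projIcc 0 1 zero_le_one t)) (Icc 0 1)

lemma eLipOn_mono [MetricSpace X] (g : X → ℝ) {E F : Set X} (h : E ⊆ F) :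
    eLipOn g E ≤ eLipOn g F := by
  refine iSup₂_le fun a ha => iSup₂_le fun b hb => ?_
  exact le_iSup₂_of_le a (h ha) (le_iSup₂_of_le b (h hb) le_rfl)

lemma le_eLipOn [MetricSpace X] {g : X → ℝ} {E : Set X} {a b : X} (ha : a ∈ E) (hb : b ∈ E) :
    edist (g a) (g b) / edist a b ≤ eLipOn g E :=
  le_iSup₂_of_le a ha (le_iSup₂_of_le b hb le_rfl)

lemma eslope_le_ALC [MetricSpace X] (f : X → ℝ) (y : X) : eslope f y ≤ ALC f y := by
  refine le_iInf₂ fun r hr => ?_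
  refine limsup_le_of_le (by isBoundedDefault) ?_
  filter_upwards [self_mem_nhdsWithin,
    eventually_nhdsWithin_of_eventually_nhds (Metric.ball_mem_nhds y hr)] with z _ hz
  exact le_eLipOn hz (Metric.mem_ball_self hr)

lemma usc_ALC [MetricSpace X] (f : X → ℝ) : UpperSemicontinuous (ALC f) := by
  intro x c hc
  obtain ⟨r, hr, hrc⟩ : ∃ r ∈ Ioi (0:ℝ), eLipOn f (Metric.ball x r) < c := by
    simpa [ALC, iInf_lt_iff] using hc
  filter_upwards [Metric.ball_mem_nhds x (by linarith [hr.out] : (0:ℝ) < r/2)] with y hy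
  calc ALC f y ≤ eLipOn f (Metric.ball y (r/2)) :=
        iInf₂_le _ (by simp; linarith [hr.out])
    _ ≤ eLipOn f (Metric.ball x r) := by
        refine eLipOn_mono _ fun z hz => ?_
        have := Metric.mem_ball.1 hz
        have := Metric.mem_ball.1 hy
        exact Metric.mem_ball.2 (by
          calc dist z x ≤ dist z y + dist y x := dist_triangle _ _ _
            _ < r/2 + r/2 := by linarith
            _ = r := by ring)
    _ < c := hrc

/-- Chain lemma: if `f` satisfies a local one-sided Lipschitz estimate of constant `c`
at every point of a curve, then the endpoint variation of `f` is bounded by `c` times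
the length of the curve. -/
lemma chain_lemma [MetricSpace X] (f : X → ℝ) (c : ℝ≥0∞) (φ : ℝ → X)
    (hφ : ContinuousOn φ (Icc 0 1))
    (hsl : ∀ t ∈ Icc (0:ℝ) 1, ∀ᶠ q in 𝓝 (φ t), edist (f q) (f (φ t)) ≤ c * edist q (φ t)) :
    edist (f (φ 1)) (f (φ 0)) ≤ c * eVariationOn φ (Icc 0 1) := by
  set S : Set ℝ := {t | t ∈ Icc (0:ℝ) 1 ∧
      edist (f (φ t)) (f (φ 0)) ≤ c * eVariationOn φ (Icc 0 1 ∩ Icc 0 t)} with hS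
  have h0 : (0:ℝ) ∈ S := ⟨⟨le_rfl, zero_le_one⟩, by simp⟩
  have hbdd : BddAbove S := ⟨1, fun t ht => ht.1.2⟩
  set s := sSup S with hsdef
  have hs0 : (0:ℝ) ≤ s := le_csSup hbdd h0
  have hs1 : s ≤ 1 := csSup_le ⟨0, h0⟩ fun t ht => ht.1.2
  have hsI : s ∈ Icc (0:ℝ) 1 := ⟨hs0, hs1⟩
  -- local estimate around s
  have hev : ∀ᶠ t in 𝓝[Icc (0:ℝ) 1] s,
      edist (f (φ t)) (f (φ s)) ≤ c * edist (φ t) (φ s) :=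
    (hφ s hsI).eventually (hsl s hsI)
  obtain ⟨η, hη, hηs⟩ : ∃ η > 0, ∀ t ∈ Icc (0:ℝ) 1, |t - s| < η →
      edist (f (φ t)) (f (φ s)) ≤ c * edist (φ t) (φ s) := by
    rw [eventually_iff, Metric.mem_nhdsWithin_iff] at hev
    obtain ⟨ε, hε, hsub⟩ := hev
    exact ⟨ε, hε, fun t htI htd => hsub ⟨by simpa [Real.dist_eq] using htd, htI⟩⟩
  -- Step A: the supremum belongs to S
  have hstep : ∀ t ∈ S, t ≤ s → |t - s| < η →
      edist (f (φ s)) (f (φ 0)) ≤ c * eVariationOn φ (Icc 0 1 ∩ Icc 0 s) := by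
    intro t htS htle hd
    calc edist (f (φ s)) (f (φ 0))
        ≤ edist (f (φ t)) (f (φ s)) + edist (f (φ t)) (f (φ 0)) := by
          rw [edist_comm (f (φ t))]; exact edist_triangle _ _ _
      _ ≤ c * edist (φ t) (φ s) + c * eVariationOn φ (Icc 0 1 ∩ Icc 0 t) :=
          add_le_add (hηs t htS.1 hd) htS.2
      _ ≤ c * eVariationOn φ (Icc 0 1 ∩ Icc t s) + c * eVariationOn φ (Icc 0 1 ∩ Icc 0 t) := by
          gcongr
          exact eVariationOn.edist_le φ ⟨htS.1, le_rfl, htle⟩ ⟨hsI, htle, le_rfl⟩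
      _ = c * (eVariationOn φ (Icc 0 1 ∩ Icc 0 t) + eVariationOn φ (Icc 0 1 ∩ Icc t s)) := by
          rw [mul_add, add_comm]
      _ = c * eVariationOn φ (Icc 0 1 ∩ Icc 0 s) := by
          rw [eVariationOn.Icc_add_Icc φ htS.1.1 htle htS.1]
  have hss : s ∈ S := by
    obtain ⟨t, htS, hts⟩ := exists_lt_of_lt_csSup ⟨0, h0⟩ (show s - η < s by linarith)
    have htle : t ≤ s := le_csSup hbdd htS
    refine ⟨hsI, hstep t htS htle ?_⟩
    rw [abs_sub_lt_iff]; constructor <;> linarith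
  have hone : (1:ℝ) ∈ S := by
    rcases eq_or_lt_of_le hs1 with heq | hlt
    · exact heq ▸ hss
    · exfalso
      set t := min (s + η/2) 1 with htdef
      have hst : s < t := lt_min (by linarith) hlt
      have htub : t ≤ s + η/2 := min_le_left _ _
      have htI : t ∈ Icc (0:ℝ) 1 := ⟨le_trans hs0 hst.le, min_le_right _ _⟩
      have hd : |t - s| < η := by rw [abs_sub_lt_iff]; constructor <;> linarith
      have htS : t ∈ S := by
        refine ⟨htI, ?_⟩
        calc edist (f (φ t)) (f (φ 0))
            ≤ edist (f (φ t)) (f (φ s)) + edist (f (φ s)) (f (φ 0)) := edist_triangle _ _ _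
          _ ≤ c * edist (φ t) (φ s) + c * eVariationOn φ (Icc 0 1 ∩ Icc 0 s) :=
              add_le_add (hηs t htI hd) hss.2
          _ ≤ c * eVariationOn φ (Icc 0 1 ∩ Icc s t) + c * eVariationOn φ (Icc 0 1 ∩ Icc 0 s) := by
              gcongr
              rw [edist_comm]
              exact eVariationOn.edist_le φ ⟨hsI, le_rfl, hst.le⟩ ⟨htI, hst.le, le_rfl⟩
          _ = c * (eVariationOn φ (Icc 0 1 ∩ Icc 0 s) + eVariationOn φ (Icc 0 1 ∩ Icc s t)) := by
              rw [mul_add, add_comm]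
          _ = c * eVariationOn φ (Icc 0 1 ∩ Icc 0 t) := by
              rw [eVariationOn.Icc_add_Icc φ hs0 hst.le hsI]
      exact absurd (le_csSup hbdd htS) (not_le.2 hst)
  have := hone.2
  simpa using this

theorem stmt6 [MetricSpace X] (f : X → ℝ) (K : ℝ≥0) (hf : LipschitzWith K f) :
    (∀ x : X, uscEnv (eslope f) x ≤ ALC f x ∧ ALC f x ≤ eLipOn f univ) ∧
    (IsLengthSpace X → ∀ x : X, ALC f x = uscEnv (eslope f) x) := by
  have hALCmem : ALC f ∈ {u : X → ℝ≥0∞ | UpperSemicontinuous u ∧ ∀ y, eslope f y ≤ u y} :=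
    ⟨usc_ALC f, eslope_le_ALC f⟩
  have h1 : ∀ x, uscEnv (eslope f) x ≤ ALC f x := fun x => iInf₂_le _ hALCmem
  have h2 : ∀ x : X, ALC f x ≤ eLipOn f univ := fun x =>
    iInf₂_le_of_le 1 (by norm_num) (eLipOn_mono f (subset_univ _))
  refine ⟨fun x => ⟨h1 x, h2 x⟩, fun hL x => le_antisymm ?_ (h1 x)⟩
  refine le_iInf₂ fun u hu => ?_
  obtain ⟨huusc, humaj⟩ := hu
  refine le_of_forall_gt_imp_ge_of_dense fun c hc => ?_
  rcases eq_or_ne c ∞ with rfl | hctop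
  · exact le_top
  have hc0 : c ≠ 0 := (lt_of_le_of_lt zero_le hc).ne'
  obtain ⟨r, hr, hball⟩ : ∃ r > 0, ∀ y ∈ Metric.ball x r, u y < c := by
    have := huusc x c hc
    rwa [Metric.eventually_nhds_iff_ball] at this
  -- the key two-point estimate on the small ball
  have key : ∀ y ∈ Metric.ball x (r/4), ∀ z ∈ Metric.ball x (r/4),
      edist (f y) (f z) ≤ c * edist y z := by
    intro y hy z hz
    refine ENNReal.le_of_forall_pos_le_add fun ε hε _ => ?_
    set ε' : ℝ≥0∞ := min (ε / c) (ENNReal.ofReal (r/8)) with hε'def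
    have hε'0 : 0 < ε' := lt_min (ENNReal.div_pos (by exact_mod_cast hε.ne') hctop)
      (ENNReal.ofReal_pos.2 (by linarith))
    have hε'r : ε' ≤ ENNReal.ofReal (r/8) := min_le_right _ _
    have hlt : edist y z < edist y z + ε' := ENNReal.lt_add_right (edist_ne_top _ _) hε'0.ne'
    obtain ⟨γ, hγ⟩ : ∃ γ : Path y z,
        eVariationOn (fun t : ℝ => γ (Set.projIcc 0 1 zero_le_one t)) (Icc 0 1)
          < edist y z + ε' := by
      rw [← iInf_lt_iff, ← hL y z]; exact hlt
    set φ : ℝ → X := fun t => γ (Set.projIcc 0 1 zero_le_one t) with hφdef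
    have hφ0 : φ 0 = y := by
      show γ (Set.projIcc 0 1 zero_le_one 0) = y
      rw [Set.projIcc_left]; exact γ.source
    have hφ1 : φ 1 = z := by
      show γ (Set.projIcc 0 1 zero_le_one 1) = z
      rw [Set.projIcc_right]; exact γ.target
    have hφcont : ContinuousOn φ (Icc 0 1) :=
      (γ.continuous.comp continuous_projIcc).continuousOn
    have hyx : edist y x < ENNReal.ofReal (r/4) := edist_lt_ofReal.2 (Metric.mem_ball.1 hy)
    have hzx : edist z x < ENNReal.ofReal (r/4) := edist_lt_ofReal.2 (Metric.mem_ball.1 hz)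
    have hyz : edist y z < ENNReal.ofReal (r/4) + ENNReal.ofReal (r/4) := by
      calc edist y z ≤ edist y x + edist x z := edist_triangle _ _ _
        _ < _ := ENNReal.add_lt_add hyx (by rwa [edist_comm])
    have hmem : ∀ t ∈ Icc (0:ℝ) 1, φ t ∈ Metric.ball x r := by
      intro t ht
      have hv : edist y (φ t) ≤ eVariationOn φ (Icc 0 1) := by
        conv_lhs => rw [← hφ0]
        exact eVariationOn.edist_le φ ⟨le_rfl, zero_le_one⟩ ht
      have : edist x (φ t) < ENNReal.ofReal (r/4) + (ENNReal.ofReal (r/4)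
          + ENNReal.ofReal (r/4) + ENNReal.ofReal (r/8)) := by
        calc edist x (φ t) ≤ edist x y + edist y (φ t) := edist_triangle _ _ _
          _ ≤ edist x y + (edist y z + ε') := by
              gcongr
              exact hv.trans hγ.le
          _ < ENNReal.ofReal (r/4) + (ENNReal.ofReal (r/4) + ENNReal.ofReal (r/4)
              + ENNReal.ofReal (r/8)) := by
              refine ENNReal.add_lt_add (by rwa [edist_comm]) ?_
              calc edist y z + ε' < (ENNReal.ofReal (r/4) + ENNReal.ofReal (r/4)) + ε' :=
                    ENNReal.add_lt_add_right (by
                      refine ne_of_lt (lt_of_le_of_lt hε'r ?_)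
                      exact ENNReal.ofReal_lt_top) hyz
                _ ≤ _ := by gcongr
      rw [Metric.mem_ball, ← edist_lt_ofReal]
      rw [edist_comm]
      refine this.trans_le ?_
      rw [← ENNReal.ofReal_add (by linarith) (by linarith),
        ← ENNReal.ofReal_add (by linarith) (by linarith),
        ← ENNReal.ofReal_add (by linarith) (by linarith)]
      exact ENNReal.ofReal_le_ofReal (by linarith)
    have hsl : ∀ t ∈ Icc (0:ℝ) 1, ∀ᶠ q in 𝓝 (φ t),
        edist (f q) (f (φ t)) ≤ c * edist q (φ t) := by
      intro t ht
      have hslope : eslope f (φ t) < c := lt_of_le_of_lt (humaj _) (hball _ (hmem t ht))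
      have hev := Filter.eventually_lt_of_limsup_lt hslope
      rw [eventually_nhdsWithin_iff] at hev
      filter_upwards [hev] with q hq
      rcases eq_or_ne q (φ t) with rfl | hne
      · simp
      · have hrat := hq hne
        have h0 : edist q (φ t) ≠ 0 := by simpa [edist_eq_zero] using hne
        exact ((ENNReal.div_lt_iff (Or.inl h0) (Or.inl (edist_ne_top _ _))).1 hrat).le
    have hchain := chain_lemma f c φ hφcont hsl
    rw [hφ0, hφ1] at hchain
    calc edist (f y) (f z) = edist (f z) (f y) := edist_comm _ _
      _ ≤ c * eVariationOn φ (Icc 0 1) := hchain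
      _ ≤ c * (edist y z + ε') := mul_le_mul_right hγ.le _
      _ = c * edist y z + c * ε' := mul_add _ _ _
      _ ≤ c * edist y z + ε := by
          gcongr
          calc c * ε' ≤ c * (ε / c) := by gcongr; exact min_le_left _ _
            _ ≤ ε := ENNReal.mul_div_le
  calc ALC f x ≤ eLipOn f (Metric.ball x (r/4)) := iInf₂_le _ (by simp; linarith)
    _ ≤ c := by
      refine iSup₂_le fun a ha => iSup₂_le fun b hb => ?_
      rcases eq_or_ne a b with rfl | hab
      · simp
      · have h0 : edist a b ≠ 0 := by simpa [edist_eq_zero] using hab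
        rw [ENNReal.div_le_iff h0 (edist_ne_top _ _)]
        exact key a ha b hb
end

section
/- Let (X,d) be a separable metric space. Then any sequence of functionals F_h : X → [−∞, +∞] admits a subsequence which Γ-converges to some functional F : X → [−∞,+∞]. -/
open Filter
open scoped Topology

/- Γ-convergence of a sequence of functionals `F_h : Y → [-∞,+∞]` to `G`:
(a) the liminf inequality along every convergent sequence, and
(b) existence of recovery sequences. -/
def GammaConvergesTo {Y : Type*} [TopologicalSpace Y]
    (F : ℕ → Y → EReal) (G : Y → EReal) : Prop :=
  (∀ (u : Y) (u_ : ℕ → Y), Tendsto u_ atTop (𝓝 u) →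
    G u ≤ liminf (fun n => F n (u_ n)) atTop) ∧
  (∀ u : Y, ∃ u_ : ℕ → Y, Tendsto u_ atTop (𝓝 u) ∧
    limsup (fun n => F n (u_ n)) atTop ≤ G u)

open TopologicalSpace

/- **Statement 8** (compactness of Γ-convergence). On a separable metric space, every
sequence of functionals with values in `[-∞,+∞]` has a Γ-convergent subsequence. -/
theorem stmt8 {Y : Type*} [MetricSpace Y] [TopologicalSpace.SeparableSpace Y]
    (F : ℕ → Y → EReal) :
    ∃ φ : ℕ → ℕ, StrictMono φ ∧
      ∃ G : Y → EReal, GammaConvergesTo (fun k => F (φ k)) G := by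
  classical
  haveI : SecondCountableTopology Y := UniformSpace.secondCountable_of_separable Y
  haveI : Countable ↥(countableBasis Y) := (countable_countableBasis Y).to_subtype
  set m : ℕ → ↥(countableBasis Y) → EReal := fun h U => ⨅ x ∈ (U : Set Y), F h x with hm
  obtain ⟨L, -, φ, hφ, hconv⟩ :=
    IsCompact.tendsto_subseq (isCompact_univ : IsCompact (Set.univ : Set (↥(countableBasis Y) → EReal)))
      (fun n => Set.mem_univ (m n))
  have hL : ∀ U, Tendsto (fun k => m (φ k) U) atTop (𝓝 (L U)) := tendsto_pi_nhds.mp hconv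
  refine ⟨φ, hφ, fun u => ⨆ (U : ↥(countableBasis Y)) (_ : u ∈ (U : Set Y)), L U, ?_, ?_⟩
  · -- liminf inequality
    intro u u_ hu
    refine iSup₂_le fun U hU => ?_
    have hopen : IsOpen (U : Set Y) := isOpen_of_mem_countableBasis U.2
    have hev : ∀ᶠ k in atTop, u_ k ∈ (U : Set Y) := hu (hopen.mem_nhds hU)
    rw [← (hL U).liminf_eq]
    exact liminf_le_liminf (hev.mono fun k hk => iInf₂_le _ hk)
  · -- recovery sequence
    intro u
    set Gu : EReal := ⨆ (U : ↥(countableBasis Y)) (_ : u ∈ (U : Set Y)), L U with hGu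
    by_cases hGtop : Gu = ⊤
    · refine ⟨fun _ => u, tendsto_const_nhds, ?_⟩
      show _ ≤ Gu
      rw [hGtop]; exact le_top
    -- sequence c j > Gu tending to Gu
    obtain ⟨c, hc_gt, hc_tend⟩ : ∃ c : ℕ → EReal, (∀ j, Gu < c j) ∧ Tendsto c atTop (𝓝 Gu) := by
      by_cases hGbot : Gu = ⊥
      · refine ⟨fun j => ((-(j : ℝ) : ℝ) : EReal), ?_, ?_⟩
        · intro j; rw [hGbot]; exact EReal.bot_lt_coe _
        · rw [hGbot, EReal.tendsto_nhds_bot_iff_real]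
          intro x
          filter_upwards [eventually_gt_atTop ⌈-x⌉₊] with j hj
          rw [EReal.coe_lt_coe_iff]
          have h1 : -x ≤ (⌈-x⌉₊ : ℝ) := Nat.le_ceil _
          have h2 : ((⌈-x⌉₊ : ℕ) : ℝ) < (j : ℝ) := by exact_mod_cast hj
          linarith
      · obtain ⟨r, hr⟩ : ∃ r : ℝ, Gu = (r : EReal) := by
          lift Gu to ℝ using ⟨hGtop, hGbot⟩ with r; exact ⟨r, rfl⟩
        refine ⟨fun j => ((r + 1 / (j + 1) : ℝ) : EReal), ?_, ?_⟩
        · intro j; rw [hr, EReal.coe_lt_coe_iff]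
          have : (0:ℝ) < 1 / ((j:ℝ) + 1) := by positivity
          linarith
        · rw [hr]
          exact EReal.tendsto_coe.mpr (by
            simpa using tendsto_const_nhds.add (tendsto_one_div_add_atTop_nhds_zero_nat (𝕜 := ℝ)))
    -- basic neighborhoods shrinking to u
    have hVex : ∀ j : ℕ, ∃ V : ↥(countableBasis Y), u ∈ (V : Set Y) ∧
        (V : Set Y) ⊆ Metric.ball u (1 / (j + 1)) := by
      intro j
      have hpos : (0:ℝ) < 1 / ((j:ℝ) + 1) := by positivity
      obtain ⟨V, hVB, huV, hVsub⟩ := (isBasis_countableBasis Y).exists_subset_of_mem_open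
        (Metric.mem_ball_self hpos) Metric.isOpen_ball
      exact ⟨⟨V, hVB⟩, huV, hVsub⟩
    choose V huV hVsub using hVex
    -- eventual existence of good points
    have key : ∀ j : ℕ, ∃ N : ℕ, ∀ k, N ≤ k → ∃ w ∈ (V j : Set Y), F (φ k) w < c j := by
      intro j
      have hLV : L (V j) ≤ Gu := by
        rw [hGu]; exact le_iSup_of_le (V j) (le_iSup_of_le (huV j) le_rfl)
      have hev : ∀ᶠ k in atTop, m (φ k) (V j) < c j :=
        ((hL (V j)).eventually_lt_const (lt_of_le_of_lt hLV (hc_gt j)))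
      obtain ⟨N, hN⟩ := eventually_atTop.mp hev
      refine ⟨N, fun k hk => ?_⟩
      have h := hN k hk
      simp only [hm, iInf_lt_iff] at h
      obtain ⟨w, hwmem, hwlt⟩ := h
      exact ⟨w, hwmem, hwlt⟩
    choose N hNspec using key
    have key2 : ∀ j k : ℕ, ∃ w, w ∈ (V j : Set Y) ∧ (N j ≤ k → F (φ k) w < c j) := by
      intro j k
      by_cases h : N j ≤ k
      · obtain ⟨w, hw1, hw2⟩ := hNspec j k h
        exact ⟨w, hw1, fun _ => hw2⟩
      · exact ⟨u, huV j, fun h' => absurd h' h⟩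
    choose w hw1 hw2 using key2
    -- strictly monotone thresholds
    set M : ℕ → ℕ := fun j => Nat.rec (N 0) (fun j' Mj' => max (Mj' + 1) (N (j' + 1))) j with hM
    have hMmono : StrictMono M := strictMono_nat_of_lt_succ fun j => by
      have : M j + 1 ≤ M (j + 1) := le_max_left _ _
      omega
    have hNM : ∀ j, N j ≤ M j := by
      intro j; cases j with
      | zero => exact le_refl _
      | succ j' => exact le_max_right _ _
    have hjM : ∀ j, j ≤ M j := fun j => hMmono.le_apply
    set jk : ℕ → ℕ := fun k => Nat.findGreatest (fun j => M j ≤ k) k with hjk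
    have hjk1 : ∀ k, M 0 ≤ k → M (jk k) ≤ k := fun k hk =>
      Nat.findGreatest_spec (P := fun j => M j ≤ k) (m := 0) (n := k) (Nat.zero_le k) hk
    have hjk2 : ∀ j k, M j ≤ k → j ≤ jk k := fun j k hk =>
      Nat.le_findGreatest (le_trans (hjM j) hk) hk
    have hjk_tendsto : Tendsto jk atTop atTop := by
      rw [tendsto_atTop]
      intro j
      filter_upwards [eventually_ge_atTop (M j)] with k hk
      exact hjk2 j k hk
    refine ⟨fun k => if M 0 ≤ k then w (jk k) k else u, ?_, ?_⟩
    · -- convergence to u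
      rw [Metric.tendsto_atTop]
      intro ε hε
      obtain ⟨j, hj⟩ := exists_nat_gt (1 / ε)
      refine ⟨max (M j) (M 0), fun k hk => ?_⟩
      have hk0 : M 0 ≤ k := le_trans (le_max_right _ _) hk
      have hkj : M j ≤ k := le_trans (le_max_left _ _) hk
      simp only [if_pos hk0]
      have hjj : j ≤ jk k := hjk2 j k hkj
      have hball := hVsub (jk k) (hw1 (jk k) k)
      rw [Metric.mem_ball] at hball
      have h1 : 1 / ((jk k : ℝ) + 1) ≤ 1 / ((j : ℝ) + 1) := by
        apply one_div_le_one_div_of_le (by positivity)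
        exact_mod_cast Nat.succ_le_succ hjj
      have h2 : 1 / ((j : ℝ) + 1) < ε := by
        rw [div_lt_iff₀ (by positivity)]
        rw [div_lt_iff₀ hε] at hj
        nlinarith
      linarith
    · -- limsup bound
      have hle : ∀ᶠ k in atTop, F (φ k) (if M 0 ≤ k then w (jk k) k else u) ≤ c (jk k) := by
        filter_upwards [eventually_ge_atTop (M 0)] with k hk
        rw [if_pos hk]
        exact le_of_lt (hw2 (jk k) k (le_trans (hNM (jk k)) (hjk1 k hk)))
      show _ ≤ Gu
      calc limsup (fun k => F (φ k) (if M 0 ≤ k then w (jk k) k else u)) atTop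
          ≤ limsup (fun k => c (jk k)) atTop := limsup_le_limsup hle
        _ = Gu := (hc_tend.comp hjk_tendsto).limsup_eq
end

section
/- Let (X,d) be a complete separable metric space with a dense sequence (x_k). For every δ>0 there exist a countable family of Borel sets A_i^δ and points z_i^δ ∈ X such that: (i) the sets A_i^δ form a partition of X and d(z_i^δ, z_j^δ) > δ whenever i≠j; (ii) B(z_i^δ, δ/3) ⊆ A_i^δ ⊆ B(z_i^δ, (5/4)δ) for every i. -/
open Filter Set Metric
open scoped ENNReal NNReal Topology

/-- Greedy selection: `sel xs δ k` holds iff `xs k` is at distance `> δ` from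
all previously selected points. -/
def sel {X : Type*} [MetricSpace X] (xs : ℕ → X) (δ : ℝ) (k : ℕ) : Prop :=
  ∀ j, ∀ _ : j < k, sel xs δ j → δ < dist (xs k) (xs j)
termination_by k

lemma sel_iff {X : Type*} [MetricSpace X] (xs : ℕ → X) (δ : ℝ) (k : ℕ) :
    sel xs δ k ↔ ∀ j, j < k → sel xs δ j → δ < dist (xs k) (xs j) := by
  rw [sel]

/- **Statement 12** (partitions at scale `δ`). In a complete separable metric space,
for every `δ > 0` there is a countable Borel partition `{A_i}` with points `z_i` such
that `d(z_i, z_j) > δ` for `i ≠ j` and `B(z_i, δ/3) ⊆ A_i ⊆ B(z_i, 5δ/4)`. -/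
theorem stmt12 {X : Type*} [MetricSpace X] [CompleteSpace X]
    [MeasurableSpace X] [BorelSpace X]
    (xs : ℕ → X) (hdense : DenseRange xs) (δ : ℝ) (hδ : 0 < δ) :
    ∃ (I : Set ℕ) (z : ℕ → X) (A : ℕ → Set X),
      (∀ i ∈ I, MeasurableSet (A i)) ∧
      (⋃ i ∈ I, A i) = univ ∧
      (∀ i ∈ I, ∀ j ∈ I, i ≠ j → Disjoint (A i) (A j) ∧ δ < dist (z i) (z j)) ∧
      (∀ i ∈ I, ball (z i) (δ / 3) ⊆ A i ∧ A i ⊆ ball (z i) (5 / 4 * δ)) := by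
  classical
  set I : Set ℕ := {k | sel xs δ k} with hI
  -- separation
  have hsep : ∀ i ∈ I, ∀ j ∈ I, i ≠ j → δ < dist (xs i) (xs j) := by
    intro i hi j hj hij
    rcases lt_or_gt_of_ne hij with h | h
    · rw [dist_comm]
      exact (sel_iff xs δ j).1 hj i h hi
    · exact (sel_iff xs δ i).1 hi j h hj
  have h0I : (0 : ℕ) ∈ I := by
    rw [hI, mem_setOf_eq, sel_iff]; omega
  set S : Set X := xs '' I with hS
  have hSne : S.Nonempty := ⟨xs 0, 0, h0I, rfl⟩
  -- the inf distance to selected points is at most δ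
  have hD : ∀ x : X, infDist x S ≤ δ := by
    intro x
    refine le_of_forall_pos_le_add ?_
    intro ε hε
    obtain ⟨k, hk⟩ := hdense.exists_dist_lt x hε
    by_cases hkI : sel xs δ k
    · have : infDist x S ≤ dist x (xs k) :=
        infDist_le_dist_of_mem ⟨k, hkI, rfl⟩
      linarith
    · rw [sel_iff] at hkI
      push_neg at hkI
      obtain ⟨j, hjk, hjs, hdj⟩ := hkI
      have h1 : infDist x S ≤ dist x (xs j) :=
        infDist_le_dist_of_mem ⟨j, hjs, rfl⟩
      have h2 : dist x (xs j) ≤ dist x (xs k) + dist (xs k) (xs j) := dist_triangle _ _ _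
      linarith
  -- Voronoi cells with tolerance δ/8
  set C : ℕ → Set X := fun i => {x | dist x (xs i) < infDist x S + δ / 8} with hC
  have hCopen : ∀ i, IsOpen (C i) := by
    intro i
    exact isOpen_lt (Continuous.dist continuous_id continuous_const)
      ((continuous_infDist_pt S).add continuous_const)
  set A : ℕ → Set X := fun i => C i \ ⋃ j, ⋃ (_ : j < i ∧ j ∈ I), C j with hA
  refine ⟨I, xs, A, ?_, ?_, ?_, ?_⟩
  · -- measurability
    intro i _
    exact ((hCopen i).measurableSet).diff
      (MeasurableSet.iUnion fun j => MeasurableSet.iUnion fun _ => (hCopen j).measurableSet)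
  · -- covering
    apply eq_univ_of_forall
    intro x
    have hne : {i | i ∈ I ∧ x ∈ C i}.Nonempty := by
      have hlt : infDist x S < infDist x S + δ / 8 := by linarith
      obtain ⟨y, hyS, hy⟩ := (infDist_lt_iff hSne).1 hlt
      obtain ⟨i, hiI, rfl⟩ := hyS
      exact ⟨i, hiI, hy⟩
    set i := sInf {i | i ∈ I ∧ x ∈ C i} with hi
    have hmem := Nat.sInf_mem hne
    refine mem_iUnion.2 ⟨i, mem_iUnion.2 ⟨hmem.1, hmem.2, ?_⟩⟩
    intro hx
    obtain ⟨j, hj⟩ := mem_iUnion.1 hx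
    obtain ⟨⟨hji, hjI⟩, hxj⟩ := mem_iUnion.1 hj
    exact (Nat.notMem_of_lt_sInf hji) ⟨hjI, hxj⟩
  · -- disjointness + separation
    intro i hi j hj hij
    refine ⟨?_, hsep i hi j hj hij⟩
    rcases lt_or_gt_of_ne hij with h | h
    · refine Set.disjoint_left.2 fun x hxi hxj => ?_
      exact hxj.2 (mem_iUnion.2 ⟨i, mem_iUnion.2 ⟨⟨h, hi⟩, hxi.1⟩⟩)
    · refine Set.disjoint_left.2 fun x hxi hxj => ?_
      exact hxi.2 (mem_iUnion.2 ⟨j, mem_iUnion.2 ⟨⟨h, hj⟩, hxj.1⟩⟩)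
  · -- ball inclusions
    intro i hi
    constructor
    · intro x hx
      rw [mem_ball] at hx
      have hDle : infDist x S ≤ dist x (xs i) :=
        infDist_le_dist_of_mem ⟨i, hi, rfl⟩
      have hge : dist x (xs i) ≤ infDist x S := by
        by_contra hcon
        push_neg at hcon
        obtain ⟨y, hyS, hy⟩ := (infDist_lt_iff hSne).1 hcon
        obtain ⟨j, hjI, rfl⟩ := hyS
        by_cases hji : j = i
        · subst hji; exact absurd hy (lt_irrefl _)
        · have hfar := hsep j hjI i hi hji
          have htri : dist (xs j) (xs i) ≤ dist (xs j) x + dist x (xs i) := dist_triangle _ _ _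
          rw [dist_comm (xs j) x] at htri
          linarith
      refine ⟨by simpa [hC] using (by linarith : dist x (xs i) < infDist x S + δ / 8), ?_⟩
      intro hmem
      obtain ⟨j, hj⟩ := mem_iUnion.1 hmem
      obtain ⟨⟨hji, hjI⟩, hxj⟩ := mem_iUnion.1 hj
      have hij : i ≠ j := by omega
      have hfar : δ < dist (xs i) (xs j) := hsep i hi j hjI hij
      have htri : dist (xs i) (xs j) ≤ dist (xs i) x + dist x (xs j) := dist_triangle _ _ _
      rw [dist_comm (xs i) x] at htri
      have hxj' : dist x (xs j) < infDist x S + δ / 8 := hxj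
      linarith
    · intro x hx
      have h1 : dist x (xs i) < infDist x S + δ / 8 := hx.1
      have h2 : infDist x S ≤ δ := hD x
      rw [mem_ball]
      linarith
end

section
/- Let X = ℝ² endowed with the Euclidean distance, α = ln4/ln3, and let K ⊂ ℝ² be the von Koch snowflake curve with its α-dimensional Hausdorff measure H^α. Let f(x₁,x₂)=x₁ be the first coordinate function restricted to K. Then the set of points x∈K at which the slope |∇f|(x) (computed within the metric space K) vanishes is H^α-negligible. (Sketch: |∇f|(x)=0 forces the geometric tangent of K at x to lie in a vertical line, and such points lie on countably many Lipschitz curves, hence are σ-finite for H¹ and H^α-null since α>1.) -/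
open Filter Set MeasureTheory
open scoped ENNReal NNReal Topology

/- The four similarity maps generating the von Koch curve over the segment `[0,1]`
in `ℂ ≃ ℝ²`: contractions by `1/3`, with rotations by `±60°` in the middle pieces. -/
noncomputable def kochMaps : Fin 4 → ℂ → ℂ :=
  ![fun z => z / 3,
    fun z => Complex.exp ((Real.pi / 3 : ℂ) * Complex.I) * z / 3 + 1 / 3,
    fun z => Complex.exp (-(Real.pi / 3 : ℂ) * Complex.I) * z / 3 + 1 / 2 +
      (Real.sqrt 3 / 6 : ℂ) * Complex.I,
    fun z => z / 3 + 2 / 3]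

/- **Statement 18.** Let `K ⊂ ℝ² = ℂ` be the von Koch curve (the nonempty compact set
satisfying the self-similarity relation for the maps above), `α = log 4 / log 3`, and
`f(x₁,x₂) = x₁` restricted to `K`. Then the set of points of `K` where the slope of `f`
computed within the metric space `K` vanishes is `H^α`-negligible. -/
lemma abs_eq_one_of_pow6 (ω : ℂ) (h : ω ^ 6 = 1) : ‖ω‖ = 1 := by
  have h1 : ‖ω‖ ^ 6 = 1 := by
    rw [← norm_pow, h, norm_one]
  nlinarith [norm_nonneg ω, sq_nonneg (‖ω‖ - 1), sq_nonneg (‖ω‖ + 1),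
    sq_nonneg (‖ω‖ ^ 2 - 1), sq_nonneg (‖ω‖ ^ 3 - 1)]

lemma root6_re (ω : ℂ) (h : ω ^ 6 = 1) : 1/2 ≤ |ω.re| := by
  have habs : ‖ω‖ = 1 := abs_eq_one_of_pow6 ω h
  set a := ω.re with ha
  set b := ω.im with hb
  have hab : a ^ 2 + b ^ 2 = 1 := by
    have h3 : Complex.normSq ω = 1 := by rw [← Complex.sq_norm, habs]; norm_num
    rw [Complex.normSq_apply] at h3
    ring_nf at h3 ⊢
    linarith
  have hre : (ω ^ 6).re = 1 := by rw [h]; simp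
  have hexp : a^6 - 15*a^4*b^2 + 15*a^2*b^4 - b^6 = 1 := by
    rw [show (6:ℕ) = 1+1+1+1+1+1 from rfl] at hre
    simp only [pow_succ, pow_zero, one_mul, Complex.mul_re, Complex.mul_im] at hre
    ring_nf at hre ⊢
    linarith [hre]
  have heq : 32*a^6 - 48*a^4 + 18*a^2 - 2 = 0 := by
    have e2 : b^2 = 1 - a^2 := by linarith
    have e4 : b^4 = (1-a^2)^2 := by rw [show b^4 = (b^2)^2 by ring, e2]
    have e6 : b^6 = (1-a^2)^3 := by rw [show b^6 = (b^2)^3 by ring, e2]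
    rw [e2, e4, e6] at hexp
    ring_nf at hexp ⊢
    linarith
  have hsq : 1/4 ≤ a ^ 2 := by
    by_contra hlt
    push_neg at hlt
    have h1 : (0:ℝ) < 1 - 4*a^2 := by linarith
    have h2 : (0:ℝ) < 1 - a^2 := by nlinarith [sq_nonneg a]
    nlinarith [mul_pos (mul_pos h1 h1) h2]
  have := abs_nonneg a
  nlinarith [sq_abs a]

lemma koch_affine (i : Fin 4) : ∃ a b : ℂ, (∀ z, kochMaps i z = a * z + b) ∧ (3 * a) ^ 6 = 1 := by
  have key : ∀ θ : ℝ, (3 * (Complex.exp ((θ:ℂ) * Complex.I) / 3)) ^ 6 = Complex.exp ((6*θ:ℝ) * Complex.I) := by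
    intro θ
    rw [mul_div_cancel₀ _ (by norm_num : (3:ℂ) ≠ 0), ← Complex.exp_nat_mul]
    push_cast; ring_nf
  fin_cases i
  · exact ⟨1/3, 0, fun z => by simp [kochMaps]; ring, by norm_num⟩
  · refine ⟨Complex.exp ((Real.pi / 3 : ℂ) * Complex.I) / 3, 1/3, fun z => by simp [kochMaps]; ring, ?_⟩
    have := key (Real.pi / 3)
    rw [show ((Real.pi/3 : ℝ) : ℂ) = (Real.pi/3 : ℂ) by push_cast; ring] at this
    rw [this]
    rw [show ((6*(Real.pi/3) : ℝ) : ℂ) * Complex.I = 2*Real.pi*Complex.I by push_cast; ring]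
    exact Complex.exp_two_pi_mul_I
  · refine ⟨Complex.exp (-(Real.pi / 3 : ℂ) * Complex.I) / 3, 1/2 + (Real.sqrt 3 / 6 : ℂ) * Complex.I,
      fun z => by simp [kochMaps]; ring, ?_⟩
    have := key (-(Real.pi / 3))
    rw [show ((-(Real.pi/3) : ℝ) : ℂ) = -(Real.pi/3 : ℂ) by push_cast; ring] at this
    rw [this]
    rw [show ((6*(-(Real.pi/3)) : ℝ) : ℂ) * Complex.I = -(2*Real.pi*Complex.I) by push_cast; ring]
    rw [Complex.exp_neg, Complex.exp_two_pi_mul_I, inv_one]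
  · exact ⟨1/3, 2/3, fun z => by simp [kochMaps]; ring, by norm_num⟩

lemma koch_maps_sub (K : Set ℂ) (hself : K = ⋃ i : Fin 4, kochMaps i '' K) (i : Fin 4) :
    kochMaps i '' K ⊆ K := by
  conv_rhs => rw [hself]
  exact Set.subset_iUnion (fun j : Fin 4 => kochMaps j '' K) i

lemma zero_mem (K : Set ℂ) (hK : IsCompact K) (hne : K.Nonempty)
    (hself : K = ⋃ i : Fin 4, kochMaps i '' K) : (0:ℂ) ∈ K := by
  obtain ⟨x, hx⟩ := hne
  have hsub := koch_maps_sub K hself 0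
  have hmem : ∀ n : ℕ, x * (1/3:ℂ)^n ∈ K := by
    intro n
    induction n with
    | zero => simpa using hx
    | succ n ih =>
        have h1 : kochMaps 0 (x * (1/3:ℂ)^n) ∈ K := hsub ⟨_, ih, rfl⟩
        have heq : kochMaps 0 (x * (1/3:ℂ)^n) = x * (1/3:ℂ)^(n+1) := by
          simp [kochMaps]; ring
        rwa [heq] at h1
  have htend : Filter.Tendsto (fun n : ℕ => x * (1/3:ℂ)^n) Filter.atTop (nhds 0) := by
    have : Filter.Tendsto (fun n : ℕ => (1/3:ℂ)^n) Filter.atTop (nhds 0) := by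
      apply tendsto_pow_atTop_nhds_zero_of_norm_lt_one
      simp; norm_num
    simpa using this.const_mul x
  exact hK.isClosed.mem_of_tendsto htend (Filter.Eventually.of_forall hmem)

lemma one_mem (K : Set ℂ) (hK : IsCompact K) (hne : K.Nonempty)
    (hself : K = ⋃ i : Fin 4, kochMaps i '' K) : (1:ℂ) ∈ K := by
  obtain ⟨x, hx⟩ := hne
  have hsub := koch_maps_sub K hself 3
  have hmem : ∀ n : ℕ, 1 + (x - 1) * (1/3:ℂ)^n ∈ K := by
    intro n
    induction n with
    | zero => simpa using hx
    | succ n ih =>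
        have : kochMaps 3 (1 + (x - 1) * (1/3:ℂ)^n) ∈ K := hsub ⟨_, ih, rfl⟩
        have heq : kochMaps 3 (1 + (x - 1) * (1/3:ℂ)^n) = 1 + (x - 1) * (1/3:ℂ)^(n+1) := by
          simp [kochMaps]; ring
        rwa [heq] at this
  have htend : Filter.Tendsto (fun n : ℕ => 1 + (x - 1) * (1/3:ℂ)^n) Filter.atTop (nhds 1) := by
    have h1 : Filter.Tendsto (fun n : ℕ => (1/3:ℂ)^n) Filter.atTop (nhds 0) := by
      apply tendsto_pow_atTop_nhds_zero_of_norm_lt_one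
      simp; norm_num
    have := (h1.const_mul (x-1)).const_add 1
    simpa using this
  exact hK.isClosed.mem_of_tendsto htend (Filter.Eventually.of_forall hmem)

lemma koch_cells (K : Set ℂ) (hself : K = ⋃ i : Fin 4, kochMaps i '' K) (n : ℕ) :
    ∀ x ∈ K, ∃ a b : ℂ, ((3:ℂ)^n * a) ^ 6 = 1 ∧ (∀ z ∈ K, a * z + b ∈ K) ∧
      ∃ z ∈ K, x = a * z + b := by
  induction n with
  | zero =>
      intro x hx
      exact ⟨1, 0, by norm_num, fun z hz => by simpa using hz, x, hx, by ring⟩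
  | succ n ih =>
      intro x hx
      rw [hself] at hx
      obtain ⟨i, y, hy, hxy⟩ := by simpa using hx
      obtain ⟨a, b, hab⟩ := ih y hy
      obtain ⟨c, d, hcd, hc6⟩ := koch_affine i
      refine ⟨c * a, c * b + d, ?_, ?_, ?_⟩
      · have : ((3:ℂ)^(n+1) * (c * a)) ^ 6 = ((3:ℂ) * c)^6 * ((3:ℂ)^n * a)^6 := by ring
        rw [this, hc6, hab.1, one_mul]
      · intro z hz
        have h1 : a * z + b ∈ K := hab.2.1 z hz
        have h2 : kochMaps i (a * z + b) ∈ K := koch_maps_sub K hself i ⟨_, h1, rfl⟩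
        rw [hcd] at h2
        convert h2 using 1; ring
      · obtain ⟨z, hz, hyz⟩ := hab.2.2
        refine ⟨z, hz, ?_⟩
        rw [← hxy, hcd, hyz]; ring

theorem stmt18 (K : Set ℂ) (hK : IsCompact K) (hne : K.Nonempty)
    (hself : K = ⋃ i : Fin 4, kochMaps i '' K) :
    μH[Real.log 4 / Real.log 3]
      ({x ∈ K |
        limsup (fun y : ℂ => |y.re - x.re| / dist y x) (nhdsWithin x (K \ {x})) = 0})
      = 0 := by
  have h0 : (0:ℂ) ∈ K := zero_mem K hK hne hself
  have h1 : (1:ℂ) ∈ K := one_mem K hK hne hself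
  set D := Metric.diam K with hD
  have hD1 : 1 ≤ D := by
    have := Metric.dist_le_diam_of_mem hK.isBounded h0 h1
    simpa [Complex.dist_eq] using this
  have hDpos : (0:ℝ) < D := by linarith
  have hempty : {x ∈ K |
      limsup (fun y : ℂ => |y.re - x.re| / dist y x) (nhdsWithin x (K \ {x})) = 0} = ∅ := by
    rw [Set.eq_empty_iff_forall_notMem]
    rintro x ⟨hxK, hlim⟩
    set u : ℂ → ℝ := fun y => |y.re - x.re| / dist y x with hu
    have hub : IsBoundedUnder (· ≤ ·) (nhdsWithin x (K \ {x})) u := by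
      apply Filter.isBoundedUnder_of
      refine ⟨1, fun y => ?_⟩
      rcases eq_or_lt_of_le (dist_nonneg : (0:ℝ) ≤ dist y x) with h | h
      · simp [hu, ← h]
      · rw [hu]
        simp only
        rw [div_le_one h, Complex.dist_eq, show y.re - x.re = (y - x).re by simp [Complex.sub_re]]
        exact Complex.abs_re_le_norm _
    have hfreq : ∃ᶠ y in nhdsWithin x (K \ {x}), 1/(4*D) ≤ u y := by
      rw [Filter.frequently_iff]
      intro U hU
      obtain ⟨ε, εpos, hsub⟩ := Metric.mem_nhdsWithin_iff.1 hU
      obtain ⟨n, hn⟩ := exists_pow_lt_of_lt_one (div_pos εpos hDpos) (by norm_num : (1/3:ℝ) < 1)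
      obtain ⟨a, b, h6, hmapsK, z₀, hz₀, hxz⟩ := koch_cells K hself n x hxK
      have habs3 : ‖(3:ℂ)^n * a‖ = 1 := abs_eq_one_of_pow6 _ h6
      have h3n : ‖(3:ℂ)^n‖ = (3:ℝ)^n := by
        rw [norm_pow]; norm_num
      have habsa : ‖a‖ = (1/3:ℝ)^n := by
        rw [norm_mul, h3n] at habs3
        have h3pos : (0:ℝ) < (3:ℝ)^n := by positivity
        field_simp
        rw [div_pow, one_pow, eq_div_iff h3pos.ne']; linarith [habs3]
      have hre3 : ((3:ℂ)^n * a).re = (3:ℝ)^n * a.re := by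
        rw [show ((3:ℂ)^n) = (((3:ℝ)^n : ℝ) : ℂ) by push_cast; ring]
        exact Complex.re_ofReal_mul _ _
      have hare : (1/2:ℝ) * (1/3)^n ≤ |a.re| := by
        have := root6_re _ h6
        rw [hre3, abs_mul, abs_of_pos (by positivity : (0:ℝ) < (3:ℝ)^n)] at this
        have h3pos : (0:ℝ) < (3:ℝ)^n := by positivity
        rw [show ((1:ℝ)/2) * ((1:ℝ)/3)^n = (1/2)/((3:ℝ)^n) by rw [div_pow, one_pow]; ring,
          div_le_iff₀ h3pos]
        linarith [this]
      have hdistle : ∀ w ∈ K, dist (a*w+b) x ≤ (1/3:ℝ)^n * D := by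
        intro w hw
        rw [hxz, Complex.dist_eq, show a*w+b - (a*z₀+b) = a * (w - z₀) by ring, norm_mul, habsa]
        have : ‖w - z₀‖ ≤ D := by
          rw [← Complex.dist_eq]
          exact Metric.dist_le_diam_of_mem hK.isBounded hw hz₀
        have hp : (0:ℝ) ≤ (1/3:ℝ)^n := by positivity
        exact mul_le_mul_of_nonneg_left this hp
      -- choose y among the two endpoints of the cell
      have hkey : ∃ y ∈ K, (1/4:ℝ)*(1/3)^n ≤ |y.re - x.re| ∧ dist y x ≤ (1/3:ℝ)^n * D := by
        have hpK : b ∈ K := by simpa using hmapsK 0 h0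
        have hqK : a + b ∈ K := by simpa using hmapsK 1 h1
        have htri : |a.re| ≤ |(a+b).re - x.re| + |b.re - x.re| := by
          have : a.re = ((a+b).re - x.re) - (b.re - x.re) := by simp [Complex.add_re]
          rw [this]
          exact abs_sub _ _
        rcases le_total |b.re - x.re| |(a+b).re - x.re| with hc | hc
        · refine ⟨a + b, hqK, by linarith, ?_⟩
          have := hdistle 1 h1
          simpa using this
        · refine ⟨b, hpK, by linarith, ?_⟩
          have := hdistle 0 h0
          simpa using this
      obtain ⟨y, hyK, hyre, hydist⟩ := hkey
      have hp4 : (0:ℝ) < (1/4:ℝ)*(1/3)^n := by positivity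
      have hyne : y ≠ x := by
        intro he
        rw [he, sub_self, abs_zero] at hyre
        linarith
      have hdistpos : 0 < dist y x := dist_pos.2 hyne
      refine ⟨y, hsub ⟨?_, hyK, hyne⟩, ?_⟩
      · rw [Metric.mem_ball]
        calc dist y x ≤ (1/3:ℝ)^n * D := hydist
          _ < (ε/D) * D := by
              apply mul_lt_mul_of_pos_right hn hDpos
          _ = ε := by field_simp
      · rw [hu]
        simp only
        rw [le_div_iff₀ hdistpos]
        calc 1/(4*D) * dist y x ≤ 1/(4*D) * ((1/3:ℝ)^n * D) := by
              apply mul_le_mul_of_nonneg_left hydist (by positivity)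
          _ = (1/4:ℝ)*(1/3)^n := by field_simp
          _ ≤ |y.re - x.re| := hyre
    have hle : 1/(4*D) ≤ limsup u (nhdsWithin x (K \ {x})) :=
      Filter.le_limsup_of_frequently_le hfreq hub
    rw [hlim] at hle
    have : (0:ℝ) < 1/(4*D) := by positivity
    linarith
  rw [hempty]
  exact measure_empty
end
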